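/- For nonnegative integers i ≥ j and r ≥ p ≥ 0, the r-Stirling numbers of the second kind satisfy {i+r, j+r}_r = Σ_{k=j}^{i} C(k,j) {i+p, k+p}_p · (r-p)(r-p-1)⋯(r-p-(k-j)+1), where the last factor is the falling factorial (r-p)_{k-j}. -/

import Mathlib

open Finset

/-- The `r`-Stirling numbers of the second kind: `rS2 r i j = {i+r, j+r}_r`,
with generating function `∑_i {i+r, j+r}_r t^i/i! = (1/j!) e^{rt}(e^t-1)^j`. -/
def rS2 (r : ℕ) : ℕ → ℕ → ℕ
  | 0, 0 => 1
  | 0, _ + 1 => 0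
  | i + 1, 0 => r * rS2 r i 0
  | i + 1, j + 1 => (j + 1 + r) * rS2 r i (j + 1) + rS2 r i j

/-!
Write `r = p + d`. Pushing the recurrence of `rS2 p` through the sum turns the claimed expansion
of `rS2 (p + d) (i + 1) j` into one for level `i` with weights `(k + p) c j k + c j (k + 1)`,
where `c j k = C(k, j) d^{(k - j)}`. Since `d^{(m+1)} = (d - m) d^{(m)}` and Pascal's rule,
these weights are `(j + p + d) c j k + c (j - 1) k`, which is exactly the recurrence of
`rS2 (p + d)`, so induction on `i` closes the argument.
-/

theorem rS2_eq_zero_of_lt {r : ℕ} : ∀ {i j : ℕ}, i < j → rS2 r i j = 0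
  | 0, _ + 1, _ => rfl
  | i + 1, j + 1, h => by
    rw [rS2, rS2_eq_zero_of_lt (by omega : i < j + 1), rS2_eq_zero_of_lt (by omega : i < j),
      mul_zero]

theorem sum_mul_rS2_succ_left (q i : ℕ) (g : ℕ → ℕ) :
    ∑ k ∈ range (i + 2), g k * rS2 q (i + 1) k =
      ∑ k ∈ range (i + 1), ((k + q) * g k + g (k + 1)) * rS2 q i k := by
  calc ∑ k ∈ range (i + 2), g k * rS2 q (i + 1) k
      = ∑ k ∈ range (i + 2), (k + q) * g k * rS2 q i k +
          ∑ k ∈ range (i + 1), g (k + 1) * rS2 q i k := by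
        rw [sum_range_succ', sum_range_succ' (fun k => (k + q) * g k * rS2 q i k)]
        simp only [rS2, mul_add, sum_add_distrib, mul_left_comm (g _), mul_assoc, zero_add]
        ring
    _ = ∑ k ∈ range (i + 1), ((k + q) * g k + g (k + 1)) * rS2 q i k := by
        rw [sum_range_succ, rS2_eq_zero_of_lt (Nat.lt_succ_self i), mul_zero, add_zero,
          ← sum_add_distrib]
        simp only [add_mul]

theorem Nat.mul_descFactorial_add_descFactorial_succ (n m a : ℕ) :
    a * n.descFactorial m + n.descFactorial (m + 1) = (a + n - m) * n.descFactorial m := by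
  rw [Nat.descFactorial_succ]
  rcases le_or_gt m n with h | h
  · rw [← Nat.add_mul, Nat.add_sub_assoc h]
  · simp [Nat.descFactorial_eq_zero_iff_lt.mpr h]

/-- The coefficient of `x.descFactorial j` in `(x + d).descFactorial k` (Chu–Vandermonde). -/
def vandermondeCoeff (d j k : ℕ) : ℕ := k.choose j * d.descFactorial (k - j)

theorem vandermondeCoeff_step_zero (d p k : ℕ) :
    (k + p) * vandermondeCoeff d 0 k + vandermondeCoeff d 0 (k + 1) =
      (p + d) * vandermondeCoeff d 0 k := by
  simp only [vandermondeCoeff, Nat.choose_zero_right, one_mul, Nat.sub_zero,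
    Nat.mul_descFactorial_add_descFactorial_succ]
  congr 1
  omega

theorem vandermondeCoeff_step_succ (d p j k : ℕ) :
    (k + p) * vandermondeCoeff d (j + 1) k + vandermondeCoeff d (j + 1) (k + 1) =
      (j + 1 + (p + d)) * vandermondeCoeff d (j + 1) k + vandermondeCoeff d j k := by
  unfold vandermondeCoeff
  rw [Nat.choose_succ_succ', Nat.add_sub_add_right]
  rcases le_or_gt (j + 1) k with h | h
  · have hshift : k - j = k - (j + 1) + 1 := by omega
    have key := Nat.mul_descFactorial_add_descFactorial_succ d (k - (j + 1)) (k + p)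
    rw [show k + p + d - (k - (j + 1)) = j + 1 + (p + d) by omega] at key
    rw [hshift]
    linear_combination k.choose (j + 1) * key
  · simp [Nat.choose_eq_zero_of_lt h]

theorem rS2_add_eq_sum_vandermondeCoeff (p d : ℕ) :
    ∀ i j, rS2 (p + d) i j = ∑ k ∈ range (i + 1), vandermondeCoeff d j k * rS2 p i k
  | 0, 0 => by simp [rS2, vandermondeCoeff]
  | 0, j + 1 => by simp [rS2, vandermondeCoeff]
  | i + 1, 0 => by
    rw [rS2, sum_mul_rS2_succ_left, rS2_add_eq_sum_vandermondeCoeff p d i, mul_sum]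
    refine sum_congr rfl fun k _ => ?_
    rw [vandermondeCoeff_step_zero, mul_assoc]
  | i + 1, j + 1 => by
    rw [rS2, sum_mul_rS2_succ_left, rS2_add_eq_sum_vandermondeCoeff p d i,
      rS2_add_eq_sum_vandermondeCoeff p d i, mul_sum, ← sum_add_distrib]
    refine sum_congr rfl fun k _ => ?_
    rw [vandermondeCoeff_step_succ]
    ring

theorem rStirlingSecond_change_of_base_general (i j r p : ℕ) (hpr : p ≤ r) :
    rS2 r i j =
      ∑ k ∈ Finset.Icc j i, k.choose j * rS2 p i k * (r - p).descFactorial (k - j) := by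
  obtain ⟨d, rfl⟩ := Nat.exists_eq_add_of_le hpr
  calc rS2 (p + d) i j = ∑ k ∈ range (i + 1), vandermondeCoeff d j k * rS2 p i k :=
        rS2_add_eq_sum_vandermondeCoeff p d i j
    _ = ∑ k ∈ Icc j i, vandermondeCoeff d j k * rS2 p i k := by
        refine (sum_subset (fun k hk => ?_) fun k hk hkj => ?_).symm
        · simp only [mem_Icc, mem_range] at hk ⊢
          omega
        · simp only [mem_Icc, mem_range, not_and, not_le] at hk hkj
          have hlt : k < j := by omega
          rw [vandermondeCoeff, Nat.choose_eq_zero_of_lt hlt, zero_mul, zero_mul]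
    _ = _ := sum_congr rfl fun k _ => by
        rw [vandermondeCoeff, Nat.add_sub_cancel_left, mul_right_comm]

theorem rStirlingSecond_change_of_base (i j r p : ℕ) (hij : j ≤ i) (hpr : p ≤ r) :
    rS2 r i j =
      ∑ k ∈ Finset.Icc j i, k.choose j * rS2 p i k * (r - p).descFactorial (k - j) :=
  rStirlingSecond_change_of_base_general i j r p hpr
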